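/- Let a be a list of length L ≥ 1 of positive integers containing exactly k entries equal to 1, and let n_1,…,n_{k+1} be the lengths of the (possibly empty) segments of a delimited by the entries equal to 1, from left to right. Then for each j with 1 ≤ j ≤ k+1, the j-th tree of the canonical decoded forest decode(a) has exactly n_j + 1 leaves; consequently decode(a) has (n_1+1) + … + (n_{k+1}+1) = L + 1 leaves in total. (This is the leaf-count claim in the decoding construction of the proof of Theorem 1(2).) -/

import Mathlib

/-- A rooted plane tree: a node carrying a finite ordered list of child subtrees.
A node with no children is a leaf. -/
inductive PTree : Type where
  | node : List PTree → PTree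

namespace PTree

mutual
/-- Number of leaves of a plane tree. -/
def leaves : PTree → ℕ
  | .node [] => 1
  | .node (c :: cs) => c.leaves + leavesList cs

/-- Total number of leaves of a list of plane trees. -/
def leavesList : List PTree → ℕ
  | [] => 0
  | c :: cs => c.leaves + leavesList cs
end

mutual
/-- Height of a plane tree (a single leaf has height 1). -/
def height : PTree → ℕ
  | .node [] => 1
  | .node (c :: cs) => 1 + max c.height (heightList cs)

/-- Maximum height among a list of plane trees (0 for the empty list). -/
def heightList : List PTree → ℕ
  | [] => 0
  | c :: cs => max c.height (heightList cs)
end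

mutual
/-- Separation levels between consecutive leaves inside a tree whose root is at level `l`:
between two consecutive leaves lying in distinct children we record `l+1`
(one more than the level of their lowest common ancestor, which is the root). -/
def enc : PTree → ℕ → List ℕ
  | .node [], _ => []
  | .node (c :: cs), l => c.enc (l + 1) ++ encList cs (l + 1)

/-- Separation levels for a list of sibling subtrees all at level `l`, including
the separator `l` between consecutive subtrees. -/
def encList : List PTree → ℕ → List ℕ
  | [], _ => []
  | c :: cs, l => (l :: c.enc l) ++ encList cs l
end

end PTree

/-- Total number of leaves of a plane forest. -/
def forestLeaves (F : List PTree) : ℕ := PTree.leavesList F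

/-- Height of a plane forest: the maximum level of any of its nodes (roots are at level 1). -/
def forestHeight (F : List PTree) : ℕ := PTree.heightList F

/-- The separation array of a plane forest: for each pair of consecutive leaves
(numbered left to right), the level at which they separate (`1` if they lie in
different trees, and `1 +` the level of their lowest common ancestor otherwise). -/
def forestSep : List PTree → List ℕ
  | [] => []
  | t :: ts => t.enc 1 ++ PTree.encList ts 1

/-- Maximum entry of a list of naturals (`0` for the empty list). -/
def listMax (a : List ℕ) : ℕ := a.foldr max 0

/-- Split a list at the positions of entries equal to `v`, producing the list of the
(possibly empty) segments delimited by those entries; a list containing `k` occurrences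
of `v` yields `k + 1` segments, in left-to-right order. -/
def splitSep (v : ℕ) : List ℕ → List (List ℕ)
  | [] => [[]]
  | x :: xs =>
    match splitSep v xs with
    | [] => [[]]
    | r :: rs => if x = v then [] :: r :: rs else (x :: r) :: rs

theorem splitSep_ne_nil (v : ℕ) (s : List ℕ) : splitSep v s ≠ [] := by
  cases s with
  | nil => simp [splitSep]
  | cons x xs =>
    simp only [splitSep]
    cases h : splitSep v xs with
    | nil => simp
    | cons r rs => by_cases hxv : x = v <;> simp [hxv]

theorem listMax_le_of_mem_splitSep {v : ℕ} {s s' : List ℕ} (h : s' ∈ splitSep v s) :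
    listMax s' ≤ listMax s := by
  induction s generalizing s' with
  | nil =>
    simp only [splitSep, List.mem_singleton] at h
    subst h; exact le_rfl
  | cons x xs ih =>
    simp only [splitSep] at h
    cases hs : splitSep v xs with
    | nil => exact absurd hs (splitSep_ne_nil v xs)
    | cons r rs =>
      rw [hs] at h
      have hr : r ∈ splitSep v xs := by rw [hs]; exact List.mem_cons_self
      by_cases hxv : x = v
      · simp only [if_pos hxv, List.mem_cons] at h
        rcases h with h | h | h
        · subst h; simp [listMax]
        · subst h
          exact le_trans (ih hr) (by simp [listMax, le_max_iff, le_refl, or_true])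
        · have : s' ∈ splitSep v xs := by rw [hs]; exact List.mem_cons_of_mem _ h
          exact le_trans (ih this) (by simp [listMax, le_max_iff, le_refl, or_true])
      · simp only [if_neg hxv, List.mem_cons] at h
        rcases h with h | h
        · subst h
          have := ih hr
          simp only [listMax, List.foldr] at *
          omega
        · have : s' ∈ splitSep v xs := by rw [hs]; exact List.mem_cons_of_mem _ h
          have := ih this
          simp only [listMax, List.foldr] at *
          omega

/-- The canonical decoding `T(s, l)` of a list `s` (all of whose entries are intended to
be strictly greater than `l`) into a plane tree rooted at level `l`: the empty list
decodes to a single leaf, and otherwise the children are obtained by decoding, at level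
`l + 1`, the segments of `s` delimited by the entries equal to `l + 1`. -/
def decodeT (s : List ℕ) (l : ℕ) : PTree :=
  if h : s = [] ∨ listMax s ≤ l then .node []
  else .node ((splitSep (l + 1) s).attach.map (fun x => decodeT x.1 (l + 1)))
termination_by listMax s + 1 - l
decreasing_by
  have h1 : listMax x.1 ≤ listMax s := listMax_le_of_mem_splitSep x.2
  push_neg at h
  omega

/-- The canonical decoded forest of a list `a`: decode, as trees rooted at level `1`,
the segments of `a` delimited by the entries equal to `1`. -/
def decode (a : List ℕ) : List PTree := (splitSep 1 a).map (fun s => decodeT s 1)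

/-! The decoded tree `T(s, l)` has `|s| + 1` leaves, by induction along the recursion of
`decodeT`: the leaves of a node are those of its children, and splitting `s` at its `k`
separators gives `k + 1` segments whose lengths add up to `|s| - k`, so the children
contribute `(|s| - k) + (k + 1)` leaves. -/

theorem splitSep_cons_of_eq_cons {v x : ℕ} {xs r : List ℕ} {rs : List (List ℕ)}
    (h : splitSep v xs = r :: rs) :
    splitSep v (x :: xs) = if x = v then [] :: r :: rs else (x :: r) :: rs := by
  rw [splitSep, h]

theorem mem_of_mem_splitSep {v x : ℕ} {s s' : List ℕ} (hs' : s' ∈ splitSep v s)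
    (hx : x ∈ s') : x ∈ s ∧ x ≠ v := by
  induction s generalizing s' with
  | nil =>
    simp only [splitSep, List.mem_singleton] at hs'
    simp [hs'] at hx
  | cons y ys ih =>
    obtain ⟨r, rs, hsplit⟩ := List.exists_cons_of_ne_nil (splitSep_ne_nil v ys)
    have ih' : ∀ t ∈ r :: rs, x ∈ t → x ∈ y :: ys ∧ x ≠ v := fun t ht hxt =>
      (ih (hsplit ▸ ht) hxt).imp_left (List.mem_cons_of_mem _)
    rw [splitSep_cons_of_eq_cons hsplit] at hs'
    split_ifs at hs' with hyv
    · rcases List.mem_cons.mp hs' with rfl | hs'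
      · simp at hx
      · exact ih' s' hs' hx
    · rcases List.mem_cons.mp hs' with rfl | hs'
      · rcases List.mem_cons.mp hx with rfl | hx
        · exact ⟨List.mem_cons_self, hyv⟩
        · exact ih' r List.mem_cons_self hx
      · exact ih' s' (List.mem_cons_of_mem _ hs') hx

theorem length_splitSep (v : ℕ) (s : List ℕ) : (splitSep v s).length = s.count v + 1 := by
  induction s with
  | nil => simp [splitSep]
  | cons y ys ih =>
    obtain ⟨r, rs, hsplit⟩ := List.exists_cons_of_ne_nil (splitSep_ne_nil v ys)
    rw [hsplit] at ih
    rw [splitSep_cons_of_eq_cons hsplit, List.count_cons]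
    split_ifs with hyv <;> simp_all

theorem sum_map_length_add_one_splitSep (v : ℕ) (s : List ℕ) :
    ((splitSep v s).map (fun t => t.length + 1)).sum = s.length + 1 := by
  induction s with
  | nil => simp [splitSep]
  | cons y ys ih =>
    obtain ⟨r, rs, hsplit⟩ := List.exists_cons_of_ne_nil (splitSep_ne_nil v ys)
    rw [hsplit] at ih
    rw [splitSep_cons_of_eq_cons hsplit]
    split_ifs <;> simp_all <;> omega

namespace PTree

theorem leavesList_eq_sum (ts : List PTree) : leavesList ts = (ts.map leaves).sum := by
  induction ts with
  | nil => rfl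
  | cons t ts ih => simp [leavesList, ih]

theorem leaves_node {ts : List PTree} (h : ts ≠ []) : (node ts).leaves = (ts.map leaves).sum := by
  obtain ⟨t, ts, rfl⟩ := List.exists_cons_of_ne_nil h
  simp [leaves, leavesList_eq_sum]

end PTree

theorem lt_listMax_of_forall_lt {s : List ℕ} {l : ℕ} (hs : s ≠ []) (h : ∀ x ∈ s, l < x) :
    l < listMax s := by
  obtain ⟨x, xs, rfl⟩ := List.exists_cons_of_ne_nil hs
  exact lt_max_of_lt_left (h x List.mem_cons_self)

theorem leaves_decodeT {s : List ℕ} {l : ℕ} (h : ∀ x ∈ s, l < x) :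
    (decodeT s l).leaves = s.length + 1 := by
  induction s, l using decodeT.induct with
  | case1 s l hleaf =>
    have hs : s = [] := by
      by_contra hs
      exact (hleaf.resolve_left hs).not_gt (lt_listMax_of_forall_lt hs h)
    rw [decodeT, dif_pos hleaf, hs]
    rfl
  | case2 s l hnode ih =>
    have hsegments : ∀ t ∈ splitSep (l + 1) s, (decodeT t (l + 1)).leaves = t.length + 1 :=
      fun t ht => ih ⟨t, ht⟩ fun x hx => by
        have ⟨hxs, hxl⟩ := mem_of_mem_splitSep ht hx
        have := h x hxs
        omega
    rw [decodeT, dif_neg hnode, PTree.leaves_node (by simpa using splitSep_ne_nil (l + 1) s),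
      List.map_map, ← sum_map_length_add_one_splitSep (l + 1) s]
    congr 1
    rw [← List.attach_map_val (l := splitSep (l + 1) s) (f := fun t => t.length + 1)]
    exact List.map_congr_left fun t _ => hsegments t.1 t.2

/-- Let `a` be a list of length `L ≥ 1` of positive integers containing
exactly `k` entries equal to `1`, and let `n_1, …, n_{k+1}` be the lengths of the
(possibly empty) segments of `a` delimited by the entries equal to `1`, from left to
right (i.e. the lengths of the members of `splitSep 1 a`). Then the `j`-th tree of the
canonical decoded forest `decode a` has exactly `n_j + 1` leaves, and consequently
`decode a` has `(n_1 + 1) + … + (n_{k+1} + 1) = L + 1` leaves in total. -/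
theorem decode_tree_leaves_eq_segment_length_add_one (a : List ℕ) (hlen : 1 ≤ a.length)
    (hpos : ∀ x ∈ a, 1 ≤ x) :
    (splitSep 1 a).length = a.count 1 + 1 ∧
    (decode a).length = (splitSep 1 a).length ∧
    (∀ j, j < (decode a).length →
      ((decode a).getD j (PTree.node [])).leaves = ((splitSep 1 a).getD j []).length + 1) ∧
    (((splitSep 1 a).map (fun s => s.length + 1)).sum = a.length + 1 ∧
      forestLeaves (decode a) = a.length + 1) := by
  have hleaves : ∀ s ∈ splitSep 1 a, (decodeT s 1).leaves = s.length + 1 := fun s hs =>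
    leaves_decodeT fun x hx =>
      have ⟨hxa, hx1⟩ := mem_of_mem_splitSep hs hx
      lt_of_le_of_ne (hpos x hxa) (Ne.symm hx1)
  have hlength : (decode a).length = (splitSep 1 a).length := List.length_map _
  refine ⟨length_splitSep 1 a, hlength, fun j hj => ?_, sum_map_length_add_one_splitSep 1 a, ?_⟩
  · rw [List.getD_eq_getElem _ _ hj, List.getD_eq_getElem _ _ (hlength ▸ hj)]
    simp only [decode, List.getElem_map]
    exact hleaves _ (List.getElem_mem _)
  · rw [forestLeaves, PTree.leavesList_eq_sum, decode, List.map_map,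
      ← sum_map_length_add_one_splitSep 1 a]
    exact congrArg List.sum (List.map_congr_left hleaves)
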